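/- arXiv:2111.06392 — 3 statements merged into one kernel-verified Lean document; each statement's English description precedes it below -/
import Mathlib

section
/- Let A be a commutative ring, B : A × A → A biadditive, and suppose the 'star product' μ + Bℏ + O(ℏ²) is associative at order ℏ² in the sense that B(B(f,g),h) − B(f,B(g,h)) = C(f,g·h) − C(f·g,h) + f·C(g,h) − C(f,g)·h for some biadditive C : A × A → A, for all f,g,h. Then the skew-symmetrization B⁻(f,g) = B(f,g) − B(g,f), assumed also to satisfy the order-ℏ cocycle condition, satisfies the Jacobi identity: B⁻(f, B⁻(g,h)) + B⁻(g, B⁻(h,f)) + B⁻(h, B⁻(f,g)) = 0 for all f,g,h. -/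
/-- Order-ℏ² associativity of a star product implies the Jacobi identity for the
skew-symmetrization `B⁻(f,g) = B f g - B g f` of the first-order term. -/
theorem order_two_associativity_jacobi
    {A : Type*} [CommRing A] (B C : A → A → A)
    (hBadd1 : ∀ f g h : A, B (f + g) h = B f h + B g h)
    (hBadd2 : ∀ f g h : A, B f (g + h) = B f g + B f h)
    (hCadd1 : ∀ f g h : A, C (f + g) h = C f h + C g h)
    (hCadd2 : ∀ f g h : A, C f (g + h) = C f g + C f h)
    (hcocycle : ∀ f g h : A, f * B g h - B (f * g) h + B f (g * h) - B f g * h = 0)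
    (hassoc2 : ∀ f g h : A,
      B (B f g) h - B f (B g h)
        = C f (g * h) - C (f * g) h + f * C g h - C f g * h) :
    ∀ f g h : A,
      ((fun x y => B x y - B y x) f ((fun x y => B x y - B y x) g h))
        + ((fun x y => B x y - B y x) g ((fun x y => B x y - B y x) h f))
        + ((fun x y => B x y - B y x) h ((fun x y => B x y - B y x) f g)) = 0 := by
  have hsub2 : ∀ f x y : A, B f (x - y) = B f x - B f y := by
    intro f x y
    have := hBadd2 f (x - y) y
    rw [sub_add_cancel] at this
    exact eq_sub_of_add_eq this.symm
  have hsub1 : ∀ x y h : A, B (x - y) h = B x h - B y h := by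
    intro x y h
    have := hBadd1 (x - y) y h
    rw [sub_add_cancel] at this
    exact eq_sub_of_add_eq this.symm
  intro f g h
  simp only [hsub1, hsub2]
  linear_combination -(hassoc2 f g h) + hassoc2 g f h - hassoc2 g h f + hassoc2 h g f
    - hassoc2 h f g + hassoc2 f h g
    + congrArg (C g) (mul_comm f h) + congrArg (C h) (mul_comm g f) + congrArg (C f) (mul_comm h g)
    + congrArg (fun x => C x h) (mul_comm f g) + congrArg (fun x => C x f) (mul_comm g h)
    + congrArg (fun x => C x g) (mul_comm h f)
end

section
/- The Moyal product on polynomials: for a constant antisymmetric d×d real matrix α, the product f ⋆ g = Σ_{n≥0} (ℏⁿ/n!) α^{i₁j₁}···α^{iₙjₙ} (∂_{i₁}···∂_{iₙ} f)(∂_{j₁}···∂_{jₙ} g) (summation over repeated indices) is associative on R[x₁,…,x_d]⟦ℏ⟧. -/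
open MvPolynomial Finset

/-- Iterated partial derivative `∂_{i₁}⋯∂_{iₙ}` on polynomials in `d` variables. -/
noncomputable def iterPDeriv {d : ℕ} {n : ℕ} (i : Fin n → Fin d) :
    MvPolynomial (Fin d) ℝ →ₗ[ℝ] MvPolynomial (Fin d) ℝ :=
  (List.ofFn fun k => ((pderiv (i k)).toLinearMap :
      MvPolynomial (Fin d) ℝ →ₗ[ℝ] MvPolynomial (Fin d) ℝ)).prod

/-- The `ℏⁿ` operator of the Moyal product for a constant matrix `α`:
`Bₙ(f,g) = (1/n!) α^{i₁j₁}⋯α^{iₙjₙ} (∂_{i₁}⋯∂_{iₙ} f)(∂_{j₁}⋯∂_{jₙ} g)`. -/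
noncomputable def moyalB {d : ℕ} (α : Fin d → Fin d → ℝ) (n : ℕ)
    (f g : MvPolynomial (Fin d) ℝ) : MvPolynomial (Fin d) ℝ :=
  (n.factorial : ℝ)⁻¹ •
    ∑ i : Fin n → Fin d, ∑ j : Fin n → Fin d,
      (∏ k, α (i k) (j k)) • (iterPDeriv i f * iterPDeriv j g)

/-- The `ℝ⟦ℏ⟧`-bilinear extension of `f ⋆ g = Σₙ Bₙ(f,g)ℏⁿ` to power series with
polynomial coefficients (represented as coefficient sequences). -/
noncomputable def moyalStar {d : ℕ} (α : Fin d → Fin d → ℝ)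
    (u v : ℕ → MvPolynomial (Fin d) ℝ) : ℕ → MvPolynomial (Fin d) ℝ :=
  fun n => ∑ p ∈ Finset.HasAntidiagonal.antidiagonal n, ∑ q ∈ Finset.HasAntidiagonal.antidiagonal p.2,
    moyalB α p.1 (u q.1) (v q.2)

lemma pderiv_pderiv {σ : Type*} [DecidableEq σ] (i k : σ) (p : MvPolynomial σ ℝ) :
    pderiv i (pderiv k p) = pderiv k (pderiv i p) := by
  induction p using MvPolynomial.induction_on with
  | C a => simp
  | add p q hp hq => simp [hp, hq]
  | mul_X p j hp =>
      simp only [pderiv_mul, pderiv_X, map_add, pderiv_mul, hp, Pi.single_apply,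
        apply_ite (pderiv i), apply_ite (pderiv k), map_one, map_zero,
        Derivation.map_one_eq_zero, ite_self]
      ring

lemma pderiv_rename_eq_sum {σ τ : Type*} [Fintype σ] [DecidableEq σ] [DecidableEq τ]
    (φ : σ → τ) (j : τ) (p : MvPolynomial σ ℝ) :
    pderiv j (rename φ p) = ∑ i ∈ Finset.univ.filter (fun i => φ i = j), rename φ (pderiv i p) := by
  induction p using MvPolynomial.induction_on with
  | C a => simp
  | add p q hp hq => simp [hp, hq, Finset.sum_add_distrib]
  | mul_X p v hp =>
      rw [map_mul, rename_X, pderiv_mul, hp, pderiv_X]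
      have : ∀ i ∈ Finset.univ.filter (fun i => φ i = j),
          rename φ (pderiv i (p * X v))
            = rename φ (pderiv i p) * X (φ v)
              + rename φ p * (if i = v then 1 else 0) := by
        intro i _
        rw [pderiv_mul, map_add, map_mul, map_mul, rename_X, pderiv_X]
        congr 1
        split_ifs with h <;> simp [Pi.single_apply, h]
      rw [Finset.sum_congr rfl this, Finset.sum_add_distrib, ← Finset.sum_mul,
        ← Finset.mul_sum]
      congr 1
      rw [Finset.sum_ite_eq' (Finset.univ.filter (fun i => φ i = j)) v (fun _ => (1:MvPolynomial τ ℝ))]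
      simp [Pi.single_apply, eq_comm]

noncomputable section
variable {d : ℕ} (α : Fin d → Fin d → ℝ)

abbrev MP (m d : ℕ) := MvPolynomial (Fin m × Fin d) ℝ

def pd {m : ℕ} (v : Fin m × Fin d) : Module.End ℝ (MP m d) := (pderiv v).toLinearMap

lemma pd_commute {m : ℕ} (v w : Fin m × Fin d) : Commute (pd v) (pd w) :=
  LinearMap.ext fun p => pderiv_pderiv v w p

def Pop (s t : Fin 3) : Module.End ℝ (MP 3 d) :=
  ∑ i, ∑ j, α i j • (pd (s, i) * pd (t, j))

def Qop : Module.End ℝ (MP 2 d) :=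
  ∑ i, ∑ j, α i j • (pd ((0 : Fin 2), i) * pd ((1 : Fin 2), j))

lemma pop_commute (s t s' t' : Fin 3) : Commute (Pop (d := d) α s t) (Pop α s' t') := by
  refine Commute.sum_left _ _ _ (fun i _ => Commute.sum_left _ _ _ (fun j _ => ?_))
  refine Commute.sum_right _ _ _ (fun i' _ => Commute.sum_right _ _ _ (fun j' _ => ?_))
  refine Commute.smul_left (Commute.smul_right ?_ _) _
  exact Commute.mul_left (Commute.mul_right (pd_commute _ _) (pd_commute _ _))
    (Commute.mul_right (pd_commute _ _) (pd_commute _ _))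

/-- slot embedding -/
def sl {m : ℕ} (s : Fin m) : Fin d → Fin m × Fin d := fun i => (s, i)

lemma pd_slot {m : ℕ} (s t : Fin m) (j : Fin d) (f : MvPolynomial (Fin d) ℝ) :
    pderiv (t, j) (rename (sl (d := d) s) f)
      = if s = t then rename (sl (d := d) s) (pderiv j f) else 0 := by
  rw [pderiv_rename_eq_sum]
  have : Finset.univ.filter (fun i : Fin d => sl (d := d) s i = (t, j))
      = if s = t then {j} else ∅ := by
    split_ifs with h
    · ext i; simp [sl, Prod.ext_iff, h]
    · ext i; simp [sl, Prod.ext_iff, h]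
  rw [this]
  split_ifs with h <;> simp

def φ01 : Fin 3 × Fin d → Fin 2 × Fin d := fun v => (if v.1 = 2 then 1 else 0, v.2)
def φ12 : Fin 3 × Fin d → Fin 2 × Fin d := fun v => (if v.1 = 0 then 0 else 1, v.2)

lemma pd_mg01_0 (i : Fin d) (p : MP 3 d) :
    pderiv ((0 : Fin 2), i) (rename (φ01 (d := d)) p)
      = rename (φ01 (d := d)) (pderiv ((0 : Fin 3), i) p)
        + rename (φ01 (d := d)) (pderiv ((1 : Fin 3), i) p) := by
  rw [pderiv_rename_eq_sum]
  have : Finset.univ.filter (fun v : Fin 3 × Fin d => φ01 (d := d) v = ((0 : Fin 2), i))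
      = {((0 : Fin 3), i), ((1 : Fin 3), i)} := by
    ext ⟨s, j⟩; fin_cases s <;> simp [φ01, Prod.ext_iff]
  rw [this, Finset.sum_insert (by simp), Finset.sum_singleton]

lemma pd_mg01_1 (i : Fin d) (p : MP 3 d) :
    pderiv ((1 : Fin 2), i) (rename (φ01 (d := d)) p)
      = rename (φ01 (d := d)) (pderiv ((2 : Fin 3), i) p) := by
  rw [pderiv_rename_eq_sum]
  have : Finset.univ.filter (fun v : Fin 3 × Fin d => φ01 (d := d) v = ((1 : Fin 2), i))
      = {((2 : Fin 3), i)} := by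
    ext ⟨s, j⟩; fin_cases s <;> simp [φ01, Prod.ext_iff]
  rw [this, Finset.sum_singleton]

lemma pd_mg12_0 (i : Fin d) (p : MP 3 d) :
    pderiv ((0 : Fin 2), i) (rename (φ12 (d := d)) p)
      = rename (φ12 (d := d)) (pderiv ((0 : Fin 3), i) p) := by
  rw [pderiv_rename_eq_sum]
  have : Finset.univ.filter (fun v : Fin 3 × Fin d => φ12 (d := d) v = ((0 : Fin 2), i))
      = {((0 : Fin 3), i)} := by
    ext ⟨s, j⟩; fin_cases s <;> simp [φ12, Prod.ext_iff]
  rw [this, Finset.sum_singleton]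

lemma pd_mg12_1 (i : Fin d) (p : MP 3 d) :
    pderiv ((1 : Fin 2), i) (rename (φ12 (d := d)) p)
      = rename (φ12 (d := d)) (pderiv ((1 : Fin 3), i) p)
        + rename (φ12 (d := d)) (pderiv ((2 : Fin 3), i) p) := by
  rw [pderiv_rename_eq_sum]
  have : Finset.univ.filter (fun v : Fin 3 × Fin d => φ12 (d := d) v = ((1 : Fin 2), i))
      = {((1 : Fin 3), i), ((2 : Fin 3), i)} := by
    ext ⟨s, j⟩; fin_cases s <;> simp [φ12, Prod.ext_iff]
  rw [this, Finset.sum_insert (by simp), Finset.sum_singleton]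


lemma iterPDeriv_zero (i : Fin 0 → Fin d) (f : MvPolynomial (Fin d) ℝ) :
    iterPDeriv i f = f := by
  simp [iterPDeriv]

lemma iterPDeriv_cons {n : ℕ} (x : Fin d) (p : Fin n → Fin d) (f : MvPolynomial (Fin d) ℝ) :
    iterPDeriv (Fin.cons x p) f = pderiv x (iterPDeriv p f) := by
  simp [iterPDeriv, List.ofFn_succ]

lemma sum_pi_succ {M : Type*} [AddCommMonoid M] {n : ℕ} (F : (Fin (n+1) → Fin d) → M) :
    ∑ I : Fin (n+1) → Fin d, F I = ∑ x : Fin d, ∑ p : Fin n → Fin d, F (Fin.cons x p) := by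
  calc ∑ I : Fin (n+1) → Fin d, F I
      = ∑ z : Fin d × (Fin n → Fin d), F (Fin.cons z.1 z.2) :=
        Fintype.sum_equiv (Fin.consEquiv (fun _ : Fin (n+1) => Fin d)).symm _ _
          (fun I => by simp [Fin.consEquiv, Fin.cons_self_tail])
    _ = ∑ x : Fin d, ∑ p : Fin n → Fin d, F (Fin.cons x p) := Fintype.sum_prod_type _


lemma pd_apply {m : ℕ} (v : Fin m × Fin d) (p : MP m d) : pd v p = pderiv v p := rfl

def trip (f g h : MvPolynomial (Fin d) ℝ) : MP 3 d :=
  rename (sl (d := d) (0 : Fin 3)) f * rename (sl (d := d) (1 : Fin 3)) g *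
    rename (sl (d := d) (2 : Fin 3)) h

def pr (f h : MvPolynomial (Fin d) ℝ) : MP 2 d :=
  rename (sl (d := d) (0 : Fin 2)) f * rename (sl (d := d) (1 : Fin 2)) h

lemma pd_trip0 (j : Fin d) (f g h : MvPolynomial (Fin d) ℝ) :
    pderiv ((0 : Fin 3), j) (trip f g h) = trip (pderiv j f) g h := by
  simp [trip, pderiv_mul, pd_slot, show (1:Fin 3) ≠ 0 by decide, show (2:Fin 3) ≠ 0 by decide]
  try ring

lemma pd_trip1 (j : Fin d) (f g h : MvPolynomial (Fin d) ℝ) :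
    pderiv ((1 : Fin 3), j) (trip f g h) = trip f (pderiv j g) h := by
  simp [trip, pderiv_mul, pd_slot, show (0:Fin 3) ≠ 1 by decide, show (2:Fin 3) ≠ 1 by decide]
  try ring

lemma pd_trip2 (j : Fin d) (f g h : MvPolynomial (Fin d) ℝ) :
    pderiv ((2 : Fin 3), j) (trip f g h) = trip f g (pderiv j h) := by
  simp [trip, pderiv_mul, pd_slot, show (0:Fin 3) ≠ 2 by decide, show (1:Fin 3) ≠ 2 by decide]
  try ring

lemma pd_pr0 (j : Fin d) (f h : MvPolynomial (Fin d) ℝ) :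
    pderiv ((0 : Fin 2), j) (pr f h) = pr (pderiv j f) h := by
  simp [pr, pderiv_mul, pd_slot, show (1:Fin 2) ≠ 0 by decide]
  try ring

lemma pd_pr1 (j : Fin d) (f h : MvPolynomial (Fin d) ℝ) :
    pderiv ((1 : Fin 2), j) (pr f h) = pr f (pderiv j h) := by
  simp [pr, pderiv_mul, pd_slot, show (0:Fin 2) ≠ 1 by decide]
  try ring

lemma Pop01_trip (f g h : MvPolynomial (Fin d) ℝ) :
    Pop α 0 1 (trip f g h) = ∑ i, ∑ j, α i j • trip (pderiv i f) (pderiv j g) h := by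
  simp [Pop, LinearMap.sum_apply, LinearMap.smul_apply, Module.End.mul_apply, pd_apply,
    pd_trip0, pd_trip1]

lemma Pop12_trip (f g h : MvPolynomial (Fin d) ℝ) :
    Pop α 1 2 (trip f g h) = ∑ i, ∑ j, α i j • trip f (pderiv i g) (pderiv j h) := by
  simp [Pop, LinearMap.sum_apply, LinearMap.smul_apply, Module.End.mul_apply, pd_apply,
    pd_trip1, pd_trip2]

lemma Qop_pr (u h : MvPolynomial (Fin d) ℝ) :
    Qop α (pr u h) = ∑ i, ∑ j, α i j • pr (pderiv i u) (pderiv j h) := by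
  simp [Qop, LinearMap.sum_apply, LinearMap.smul_apply, Module.End.mul_apply, pd_apply,
    pd_pr0, pd_pr1]

lemma iterPDeriv_pderiv {n : ℕ} (p : Fin n → Fin d) (x : Fin d) (f : MvPolynomial (Fin d) ℝ) :
    iterPDeriv p (pderiv x f) = pderiv x (iterPDeriv p f) := by
  induction n with
  | zero => simp [iterPDeriv_zero]
  | succ n ih =>
      rw [← Fin.cons_self_tail p, iterPDeriv_cons, iterPDeriv_cons, ih, pderiv_pderiv]

lemma Qpow_pr (a : ℕ) : ∀ (u h : MvPolynomial (Fin d) ℝ), ((Qop α)^a) (pr u h)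
    = ∑ i : Fin a → Fin d, ∑ j : Fin a → Fin d,
        (∏ k, α (i k) (j k)) • pr (iterPDeriv i u) (iterPDeriv j h) := by
  induction a with
  | zero =>
      intro u h
      simp [iterPDeriv_zero]
  | succ a ih =>
      intro u h
      rw [pow_succ, Module.End.mul_apply, Qop_pr]
      simp only [map_sum, map_smul, ih]
      simp only [sum_pi_succ, Fin.prod_univ_succ, Fin.cons_zero, Fin.cons_succ,
        iterPDeriv_cons, iterPDeriv_pderiv, smul_smul, Finset.smul_sum]
      exact Finset.sum_congr rfl fun i0 _ => Finset.sum_comm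


lemma Ppow01_trip (b : ℕ) : ∀ (f g h : MvPolynomial (Fin d) ℝ), ((Pop α 0 1)^b) (trip f g h)
    = ∑ i : Fin b → Fin d, ∑ j : Fin b → Fin d,
        (∏ k, α (i k) (j k)) • trip (iterPDeriv i f) (iterPDeriv j g) h := by
  induction b with
  | zero => intro f g h; simp [iterPDeriv_zero]
  | succ b ih =>
      intro f g h
      rw [pow_succ, Module.End.mul_apply, Pop01_trip]
      simp only [map_sum, map_smul, ih]
      simp only [sum_pi_succ, Fin.prod_univ_succ, Fin.cons_zero, Fin.cons_succ,
        iterPDeriv_cons, iterPDeriv_pderiv, smul_smul, Finset.smul_sum]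
      exact Finset.sum_congr rfl fun i0 _ => Finset.sum_comm

lemma Ppow12_trip (b : ℕ) : ∀ (f g h : MvPolynomial (Fin d) ℝ), ((Pop α 1 2)^b) (trip f g h)
    = ∑ i : Fin b → Fin d, ∑ j : Fin b → Fin d,
        (∏ k, α (i k) (j k)) • trip f (iterPDeriv i g) (iterPDeriv j h) := by
  induction b with
  | zero => intro f g h; simp [iterPDeriv_zero]
  | succ b ih =>
      intro f g h
      rw [pow_succ, Module.End.mul_apply, Pop12_trip]
      simp only [map_sum, map_smul, ih]
      simp only [sum_pi_succ, Fin.prod_univ_succ, Fin.cons_zero, Fin.cons_succ,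
        iterPDeriv_cons, iterPDeriv_pderiv, smul_smul, Finset.smul_sum]
      exact Finset.sum_congr rfl fun i0 _ => Finset.sum_comm

lemma tot2_pr (u h : MvPolynomial (Fin d) ℝ) :
    rename Prod.snd (pr u h) = u * h := by
  rw [pr, map_mul, rename_rename, rename_rename]
  rw [show (Prod.snd ∘ sl (d := d) (0 : Fin 2)) = id from rfl,
    show (Prod.snd ∘ sl (d := d) (1 : Fin 2)) = id from rfl, rename_id, AlgHom.id_apply, AlgHom.id_apply]

lemma mg01_trip (F G h : MvPolynomial (Fin d) ℝ) :
    rename (φ01 (d := d)) (trip F G h) = pr (F * G) h := by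
  rw [trip, map_mul, map_mul, rename_rename, rename_rename, rename_rename, pr, map_mul]
  rw [show (φ01 (d := d) ∘ sl (0 : Fin 3)) = sl (0 : Fin 2) from rfl,
    show (φ01 (d := d) ∘ sl (1 : Fin 3)) = sl (0 : Fin 2) from rfl,
    show (φ01 (d := d) ∘ sl (2 : Fin 3)) = sl (1 : Fin 2) from rfl]

lemma mg12_trip (f G H : MvPolynomial (Fin d) ℝ) :
    rename (φ12 (d := d)) (trip f G H) = pr f (G * H) := by
  rw [trip, map_mul, map_mul, rename_rename, rename_rename, rename_rename, pr, map_mul]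
  rw [show (φ12 (d := d) ∘ sl (0 : Fin 3)) = sl (0 : Fin 2) from rfl,
    show (φ12 (d := d) ∘ sl (1 : Fin 3)) = sl (1 : Fin 2) from rfl,
    show (φ12 (d := d) ∘ sl (2 : Fin 3)) = sl (1 : Fin 2) from rfl, mul_assoc]

lemma tot_mg01 (p : MP 3 d) :
    rename Prod.snd (rename (φ01 (d := d)) p) = rename Prod.snd p := by
  rw [rename_rename]; rfl

lemma tot_mg12 (p : MP 3 d) :
    rename Prod.snd (rename (φ12 (d := d)) p) = rename Prod.snd p := by
  rw [rename_rename]; rfl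

lemma Qop_mg01 (p : MP 3 d) :
    Qop α (rename (φ01 (d := d)) p)
      = rename (φ01 (d := d)) ((Pop α 0 2 + Pop α 1 2) p) := by
  simp only [Qop, Pop, LinearMap.sum_apply, LinearMap.add_apply, LinearMap.smul_apply,
    Module.End.mul_apply, pd_apply, pd_mg01_1, pd_mg01_0, map_add, map_sum, map_smul,
    smul_add, Finset.sum_add_distrib]

lemma Qop_mg12 (p : MP 3 d) :
    Qop α (rename (φ12 (d := d)) p)
      = rename (φ12 (d := d)) ((Pop α 0 1 + Pop α 0 2) p) := by
  simp only [Qop, Pop, LinearMap.sum_apply, LinearMap.add_apply, LinearMap.smul_apply,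
    Module.End.mul_apply, pd_apply, pd_mg12_1, pd_mg12_0, map_add, map_sum, map_smul,
    smul_add, Finset.sum_add_distrib]

lemma Qpow_mg01 (a : ℕ) (p : MP 3 d) :
    ((Qop α)^a) (rename (φ01 (d := d)) p)
      = rename (φ01 (d := d)) (((Pop α 0 2 + Pop α 1 2)^a) p) := by
  induction a generalizing p with
  | zero => simp
  | succ a ih =>
      rw [pow_succ, Module.End.mul_apply, Qop_mg01, ih, ← Module.End.mul_apply, ← pow_succ]

lemma Qpow_mg12 (a : ℕ) (p : MP 3 d) :
    ((Qop α)^a) (rename (φ12 (d := d)) p)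
      = rename (φ12 (d := d)) (((Pop α 0 1 + Pop α 0 2)^a) p) := by
  induction a generalizing p with
  | zero => simp
  | succ a ih =>
      rw [pow_succ, Module.End.mul_apply, Qop_mg12, ih, ← Module.End.mul_apply, ← pow_succ]

lemma moyalB_eq (a : ℕ) (u h : MvPolynomial (Fin d) ℝ) :
    moyalB α a u h
      = (a.factorial : ℝ)⁻¹ • rename Prod.snd (((Qop α)^a) (pr u h)) := by
  rw [moyalB, Qpow_pr]
  congr 1
  rw [map_sum]
  refine Finset.sum_congr rfl fun i _ => ?_
  rw [map_sum]
  refine Finset.sum_congr rfl fun j _ => ?_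
  rw [map_smul, tot2_pr]

lemma pr_sum_left {ι : Type*} (s : Finset ι) (F : ι → MvPolynomial (Fin d) ℝ)
    (h : MvPolynomial (Fin d) ℝ) : pr (∑ x ∈ s, F x) h = ∑ x ∈ s, pr (F x) h := by
  simp [pr, Finset.sum_mul]

lemma pr_smul_left (c : ℝ) (f h : MvPolynomial (Fin d) ℝ) :
    pr (c • f) h = c • pr f h := by
  simp [pr, smul_mul_assoc]

lemma pr_sum_right {ι : Type*} (s : Finset ι) (f : MvPolynomial (Fin d) ℝ)
    (F : ι → MvPolynomial (Fin d) ℝ) : pr f (∑ x ∈ s, F x) = ∑ x ∈ s, pr f (F x) := by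
  simp [pr, Finset.mul_sum]

lemma pr_smul_right (c : ℝ) (f h : MvPolynomial (Fin d) ℝ) :
    pr f (c • h) = c • pr f h := by
  simp [pr, mul_smul_comm]


lemma pr_moyalB_left (b : ℕ) (f g h : MvPolynomial (Fin d) ℝ) :
    pr (moyalB α b f g) h
      = (b.factorial : ℝ)⁻¹ • rename (φ01 (d := d)) (((Pop α 0 1)^b) (trip f g h)) := by
  rw [moyalB, pr_smul_left, pr_sum_left, Ppow01_trip, map_sum]
  congr 1
  refine Finset.sum_congr rfl fun i _ => ?_
  rw [pr_sum_left, map_sum]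
  refine Finset.sum_congr rfl fun j _ => ?_
  rw [pr_smul_left, map_smul, mg01_trip]

lemma pr_moyalB_right (b : ℕ) (f g h : MvPolynomial (Fin d) ℝ) :
    pr f (moyalB α b g h)
      = (b.factorial : ℝ)⁻¹ • rename (φ12 (d := d)) (((Pop α 1 2)^b) (trip f g h)) := by
  rw [moyalB, pr_smul_right, pr_sum_right, Ppow12_trip, map_sum]
  congr 1
  refine Finset.sum_congr rfl fun i _ => ?_
  rw [pr_sum_right, map_sum]
  refine Finset.sum_congr rfl fun j _ => ?_
  rw [pr_smul_right, map_smul, mg12_trip]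

lemma nestedB_left (a b : ℕ) (f g h : MvPolynomial (Fin d) ℝ) :
    moyalB α a (moyalB α b f g) h
      = ((a.factorial : ℝ)⁻¹ * (b.factorial : ℝ)⁻¹) •
          rename Prod.snd
            (((Pop α 0 2 + Pop α 1 2)^a * (Pop α 0 1)^b) (trip f g h)) := by
  rw [moyalB_eq, pr_moyalB_left, map_smul, Qpow_mg01, map_smul, tot_mg01,
    smul_smul, Module.End.mul_apply]

lemma nestedB_right (a b : ℕ) (f g h : MvPolynomial (Fin d) ℝ) :
    moyalB α a f (moyalB α b g h)
      = ((a.factorial : ℝ)⁻¹ * (b.factorial : ℝ)⁻¹) •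
          rename Prod.snd
            (((Pop α 0 1 + Pop α 0 2)^a * (Pop α 1 2)^b) (trip f g h)) := by
  rw [moyalB_eq, pr_moyalB_right, map_smul, Qpow_mg12, map_smul, tot_mg12,
    smul_smul, Module.End.mul_apply]

lemma sum_inv_fact_pow {A : Type*} [Ring A] [Algebra ℝ A] {X Y : A} (hc : Commute X Y)
    (m : ℕ) :
    ∑ ab ∈ Finset.HasAntidiagonal.antidiagonal m,
        (((ab.1.factorial : ℝ)⁻¹ * (ab.2.factorial : ℝ)⁻¹) • (X ^ ab.1 * Y ^ ab.2))
      = (m.factorial : ℝ)⁻¹ • (X + Y) ^ m := by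
  rw [Finset.Nat.sum_antidiagonal_eq_sum_range_succ_mk, hc.add_pow, Finset.smul_sum]
  refine Finset.sum_congr rfl fun k hk => ?_
  have hk' : k ≤ m := Nat.lt_succ_iff.mp (Finset.mem_range.mp hk)
  have hfact : (m.choose k : ℝ) * k.factorial * (m - k).factorial = m.factorial := by
    exact_mod_cast congrArg (Nat.cast (R := ℝ)) (Nat.choose_mul_factorial_mul_factorial hk')
  have h1 : X ^ k * Y ^ (m - k) * (m.choose k : A) = (m.choose k : ℕ) • (X ^ k * Y ^ (m - k)) := by
    rw [nsmul_eq_mul, (Nat.cast_commute (m.choose k) _).eq]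
  rw [h1, ← Nat.cast_smul_eq_nsmul ℝ, smul_smul]
  congr 1
  have h2 : (k.factorial : ℝ) ≠ 0 := Nat.cast_ne_zero.mpr k.factorial_ne_zero
  have h3 : ((m - k).factorial : ℝ) ≠ 0 := Nat.cast_ne_zero.mpr (m - k).factorial_ne_zero
  have h4 : (m.factorial : ℝ) ≠ 0 := Nat.cast_ne_zero.mpr m.factorial_ne_zero
  field_simp
  linarith [hfact]

lemma clm (m : ℕ) (f g h : MvPolynomial (Fin d) ℝ) :
    ∑ ab ∈ Finset.HasAntidiagonal.antidiagonal m, moyalB α ab.1 (moyalB α ab.2 f g) h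
      = ∑ ab ∈ Finset.HasAntidiagonal.antidiagonal m, moyalB α ab.1 f (moyalB α ab.2 g h) := by
  have key : ∀ (X Y : Module.End ℝ (MP 3 d)), Commute X Y →
      ∑ ab ∈ Finset.HasAntidiagonal.antidiagonal m,
          ((ab.1.factorial : ℝ)⁻¹ * (ab.2.factorial : ℝ)⁻¹) •
            rename Prod.snd ((X ^ ab.1 * Y ^ ab.2) (trip f g h))
        = (m.factorial : ℝ)⁻¹ • rename Prod.snd (((X + Y) ^ m) (trip f g h)) := by
    intro X Y hc
    have := congrArg (fun (T : Module.End ℝ (MP 3 d)) =>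
      rename Prod.snd (T (trip f g h))) (sum_inv_fact_pow hc m)
    simpa [LinearMap.sum_apply, LinearMap.smul_apply, map_sum, map_smul] using this
  calc ∑ ab ∈ Finset.HasAntidiagonal.antidiagonal m, moyalB α ab.1 (moyalB α ab.2 f g) h
      = ∑ ab ∈ Finset.HasAntidiagonal.antidiagonal m,
          ((ab.1.factorial : ℝ)⁻¹ * (ab.2.factorial : ℝ)⁻¹) •
            rename Prod.snd ((((Pop α 0 2 + Pop α 1 2)) ^ ab.1 * (Pop α 0 1) ^ ab.2)
              (trip f g h)) := by
        exact Finset.sum_congr rfl fun ab _ => nestedB_left α ab.1 ab.2 f g h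
    _ = (m.factorial : ℝ)⁻¹ •
          rename Prod.snd ((((Pop α 0 2 + Pop α 1 2) + Pop α 0 1) ^ m) (trip f g h)) := by
        refine key _ _ ?_
        exact Commute.add_left (pop_commute α 0 2 0 1) (pop_commute α 1 2 0 1)
    _ = (m.factorial : ℝ)⁻¹ •
          rename Prod.snd ((((Pop α 0 1 + Pop α 0 2) + Pop α 1 2) ^ m) (trip f g h)) := by
        have : (Pop α 0 2 + Pop α 1 2) + Pop α 0 1
            = (Pop (d := d) α 0 1 + Pop α 0 2) + Pop α 1 2 := by abel
        rw [this]
    _ = ∑ ab ∈ Finset.HasAntidiagonal.antidiagonal m,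
          ((ab.1.factorial : ℝ)⁻¹ * (ab.2.factorial : ℝ)⁻¹) •
            rename Prod.snd ((((Pop α 0 1 + Pop α 0 2)) ^ ab.1 * (Pop α 1 2) ^ ab.2)
              (trip f g h)) := by
        refine (key _ _ ?_).symm
        exact Commute.add_left (pop_commute α 0 1 1 2) (pop_commute α 0 2 1 2)
    _ = ∑ ab ∈ Finset.HasAntidiagonal.antidiagonal m, moyalB α ab.1 f (moyalB α ab.2 g h) := by
        exact Finset.sum_congr rfl fun ab _ => (nestedB_right α ab.1 ab.2 f g h).symm


lemma moyalB_sum_left {ι : Type*} (a : ℕ) (s : Finset ι) (F : ι → MvPolynomial (Fin d) ℝ)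
    (h : MvPolynomial (Fin d) ℝ) :
    moyalB α a (∑ x ∈ s, F x) h = ∑ x ∈ s, moyalB α a (F x) h := by
  simp only [moyalB_eq, pr_sum_left, map_sum, Finset.smul_sum]

lemma moyalB_sum_right {ι : Type*} (a : ℕ) (s : Finset ι) (f : MvPolynomial (Fin d) ℝ)
    (F : ι → MvPolynomial (Fin d) ℝ) :
    moyalB α a f (∑ x ∈ s, F x) = ∑ x ∈ s, moyalB α a f (F x) := by
  simp only [moyalB_eq, pr_sum_right, map_sum, Finset.smul_sum]

lemma antidiag_swap_nest {M : Type*} [AddCommMonoid M] (F : ℕ → ℕ → ℕ → M) (k : ℕ) :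
    ∑ x ∈ Finset.HasAntidiagonal.antidiagonal k, ∑ y ∈ Finset.HasAntidiagonal.antidiagonal x.1, F y.1 y.2 x.2
      = ∑ x ∈ Finset.HasAntidiagonal.antidiagonal k, ∑ y ∈ Finset.HasAntidiagonal.antidiagonal x.2, F x.1 y.1 y.2 := by
  rw [Finset.sum_sigma', Finset.sum_sigma']
  refine Finset.sum_bij' (fun p _ => ⟨(p.2.1, p.2.2 + p.1.2), (p.2.2, p.1.2)⟩)
    (fun q _ => ⟨(q.1.1 + q.2.1, q.2.2), (q.1.1, q.2.1)⟩) ?_ ?_ ?_ ?_ ?_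
  · rintro ⟨⟨m, l⟩, ⟨a, b⟩⟩ hp
    simp only [Finset.mem_sigma, Finset.HasAntidiagonal.mem_antidiagonal] at hp ⊢
    obtain ⟨h1, h2⟩ := hp
    exact ⟨by omega, trivial⟩
  · rintro ⟨⟨a, t⟩, ⟨b, l⟩⟩ hq
    simp only [Finset.mem_sigma, Finset.HasAntidiagonal.mem_antidiagonal] at hq ⊢
    obtain ⟨h1, h2⟩ := hq
    exact ⟨by omega, trivial⟩
  · rintro ⟨⟨m, l⟩, ⟨a, b⟩⟩ hp
    simp only [Finset.mem_sigma, Finset.HasAntidiagonal.mem_antidiagonal] at hp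
    simp [show a + b = m by omega]
  · rintro ⟨⟨a, t⟩, ⟨b, l⟩⟩ hq
    simp only [Finset.mem_sigma, Finset.HasAntidiagonal.mem_antidiagonal] at hq
    simp [show b + l = t by omega]
  · rintro ⟨⟨m, l⟩, ⟨a, b⟩⟩ _
    rfl

lemma antidiag_pair_swap {M : Type*} [AddCommMonoid M] (f : ℕ → ℕ → M) (n : ℕ) :
    ∑ x ∈ Finset.HasAntidiagonal.antidiagonal n, f x.1 x.2 = ∑ x ∈ Finset.HasAntidiagonal.antidiagonal n, f x.2 x.1 := by
  simpa using (Finset.Nat.sum_antidiagonal_swap (f := fun x : ℕ × ℕ => f x.1 x.2) (n := n)).symm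


end

set_option maxHeartbeats 2000000 in
/-- The Moyal product associated to a constant antisymmetric matrix `α` is
associative on `ℝ[x₁,…,x_d]⟦ℏ⟧`. -/
theorem moyal_associative {d : ℕ} (α : Fin d → Fin d → ℝ)
    (hα : ∀ i j, α i j = - α j i) :
    ∀ u v w : ℕ → MvPolynomial (Fin d) ℝ,
      moyalStar α (moyalStar α u v) w = moyalStar α u (moyalStar α v w) := by
  intro u v w
  funext n
  simp only [moyalStar]
  calc
    (∑ x ∈ Finset.HasAntidiagonal.antidiagonal n, ∑ y ∈ Finset.HasAntidiagonal.antidiagonal x.2,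
        moyalB α x.1 (∑ r ∈ Finset.HasAntidiagonal.antidiagonal y.1, ∑ z ∈ Finset.HasAntidiagonal.antidiagonal r.2,
          moyalB α r.1 (u z.1) (v z.2)) (w y.2))
      = ∑ x ∈ Finset.HasAntidiagonal.antidiagonal n, ∑ y ∈ Finset.HasAntidiagonal.antidiagonal x.2,
          ∑ r ∈ Finset.HasAntidiagonal.antidiagonal y.1, ∑ z ∈ Finset.HasAntidiagonal.antidiagonal r.2,
            moyalB α x.1 (moyalB α r.1 (u z.1) (v z.2)) (w y.2) := by
        refine Finset.sum_congr rfl fun x _ => Finset.sum_congr rfl fun y _ => ?_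
        rw [moyalB_sum_left]
        exact Finset.sum_congr rfl fun r _ => moyalB_sum_left _ _ _ _ _
    _ = ∑ x ∈ Finset.HasAntidiagonal.antidiagonal n, ∑ y ∈ Finset.HasAntidiagonal.antidiagonal x.1,
          ∑ r ∈ Finset.HasAntidiagonal.antidiagonal y.2, ∑ z ∈ Finset.HasAntidiagonal.antidiagonal r.2,
            moyalB α y.1 (moyalB α r.1 (u z.1) (v z.2)) (w x.2) :=
        (antidiag_swap_nest (fun a t s => ∑ r ∈ Finset.HasAntidiagonal.antidiagonal t,
          ∑ z ∈ Finset.HasAntidiagonal.antidiagonal r.2,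
            moyalB α a (moyalB α r.1 (u z.1) (v z.2)) (w s)) n).symm
    _ = ∑ x ∈ Finset.HasAntidiagonal.antidiagonal n, ∑ y ∈ Finset.HasAntidiagonal.antidiagonal x.1,
          ∑ r ∈ Finset.HasAntidiagonal.antidiagonal y.1, ∑ z ∈ Finset.HasAntidiagonal.antidiagonal y.2,
            moyalB α r.1 (moyalB α r.2 (u z.1) (v z.2)) (w x.2) := by
        refine Finset.sum_congr rfl fun x _ => ?_
        exact (antidiag_swap_nest (fun a b l => ∑ z ∈ Finset.HasAntidiagonal.antidiagonal l,
          moyalB α a (moyalB α b (u z.1) (v z.2)) (w x.2)) x.1).symm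
    _ = ∑ x ∈ Finset.HasAntidiagonal.antidiagonal n, ∑ y ∈ Finset.HasAntidiagonal.antidiagonal x.1,
          ∑ z ∈ Finset.HasAntidiagonal.antidiagonal y.2, ∑ r ∈ Finset.HasAntidiagonal.antidiagonal y.1,
            moyalB α r.1 (moyalB α r.2 (u z.1) (v z.2)) (w x.2) := by
        refine Finset.sum_congr rfl fun x _ => Finset.sum_congr rfl fun y _ => ?_
        exact Finset.sum_comm
    _ = ∑ x ∈ Finset.HasAntidiagonal.antidiagonal n, ∑ y ∈ Finset.HasAntidiagonal.antidiagonal x.1,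
          ∑ z ∈ Finset.HasAntidiagonal.antidiagonal y.2, ∑ r ∈ Finset.HasAntidiagonal.antidiagonal y.1,
            moyalB α r.1 (u z.1) (moyalB α r.2 (v z.2) (w x.2)) := by
        refine Finset.sum_congr rfl fun x _ => Finset.sum_congr rfl fun y _ =>
          Finset.sum_congr rfl fun z _ => ?_
        exact clm α y.1 (u z.1) (v z.2) (w x.2)
    _ = ∑ x ∈ Finset.HasAntidiagonal.antidiagonal n, ∑ y ∈ Finset.HasAntidiagonal.antidiagonal x.1,
          ∑ r ∈ Finset.HasAntidiagonal.antidiagonal y.1, ∑ z ∈ Finset.HasAntidiagonal.antidiagonal y.2,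
            moyalB α r.1 (u z.1) (moyalB α r.2 (v z.2) (w x.2)) := by
        refine Finset.sum_congr rfl fun x _ => Finset.sum_congr rfl fun y _ => ?_
        exact Finset.sum_comm
    _ = ∑ x ∈ Finset.HasAntidiagonal.antidiagonal n, ∑ y ∈ Finset.HasAntidiagonal.antidiagonal x.1,
          ∑ r ∈ Finset.HasAntidiagonal.antidiagonal y.2, ∑ z ∈ Finset.HasAntidiagonal.antidiagonal r.2,
            moyalB α y.1 (u z.1) (moyalB α r.1 (v z.2) (w x.2)) := by
        refine Finset.sum_congr rfl fun x _ => ?_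
        exact antidiag_swap_nest (fun a b l => ∑ z ∈ Finset.HasAntidiagonal.antidiagonal l,
          moyalB α a (u z.1) (moyalB α b (v z.2) (w x.2))) x.1
    _ = ∑ x ∈ Finset.HasAntidiagonal.antidiagonal n, ∑ y ∈ Finset.HasAntidiagonal.antidiagonal x.2,
          ∑ r ∈ Finset.HasAntidiagonal.antidiagonal y.1, ∑ z ∈ Finset.HasAntidiagonal.antidiagonal r.2,
            moyalB α x.1 (u z.1) (moyalB α r.1 (v z.2) (w y.2)) :=
        antidiag_swap_nest (fun a t s => ∑ r ∈ Finset.HasAntidiagonal.antidiagonal t,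
          ∑ z ∈ Finset.HasAntidiagonal.antidiagonal r.2,
            moyalB α a (u z.1) (moyalB α r.1 (v z.2) (w s))) n
    _ = ∑ x ∈ Finset.HasAntidiagonal.antidiagonal n, ∑ y ∈ Finset.HasAntidiagonal.antidiagonal x.2,
          ∑ r ∈ Finset.HasAntidiagonal.antidiagonal y.2, ∑ z ∈ Finset.HasAntidiagonal.antidiagonal r.1,
            moyalB α x.1 (u z.1) (moyalB α y.1 (v z.2) (w r.2)) := by
        refine Finset.sum_congr rfl fun x _ => ?_
        exact antidiag_swap_nest (fun b l s => ∑ z ∈ Finset.HasAntidiagonal.antidiagonal l,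
          moyalB α x.1 (u z.1) (moyalB α b (v z.2) (w s))) x.2
    _ = ∑ x ∈ Finset.HasAntidiagonal.antidiagonal n, ∑ y ∈ Finset.HasAntidiagonal.antidiagonal x.2,
          ∑ r ∈ Finset.HasAntidiagonal.antidiagonal y.2, ∑ z ∈ Finset.HasAntidiagonal.antidiagonal r.2,
            moyalB α x.1 (u r.1) (moyalB α y.1 (v z.1) (w z.2)) := by
        refine Finset.sum_congr rfl fun x _ => Finset.sum_congr rfl fun y _ => ?_
        exact antidiag_swap_nest (fun p q s =>
          moyalB α x.1 (u p) (moyalB α y.1 (v q) (w s))) y.2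
    _ = ∑ x ∈ Finset.HasAntidiagonal.antidiagonal n, ∑ y ∈ Finset.HasAntidiagonal.antidiagonal x.2,
          ∑ r ∈ Finset.HasAntidiagonal.antidiagonal y.1, ∑ z ∈ Finset.HasAntidiagonal.antidiagonal y.2,
            moyalB α x.1 (u r.2) (moyalB α r.1 (v z.1) (w z.2)) := by
        refine Finset.sum_congr rfl fun x _ => ?_
        exact (antidiag_swap_nest (fun b p l => ∑ z ∈ Finset.HasAntidiagonal.antidiagonal l,
          moyalB α x.1 (u p) (moyalB α b (v z.1) (w z.2))) x.2).symm
    _ = ∑ x ∈ Finset.HasAntidiagonal.antidiagonal n, ∑ y ∈ Finset.HasAntidiagonal.antidiagonal x.2,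
          ∑ r ∈ Finset.HasAntidiagonal.antidiagonal y.1, ∑ z ∈ Finset.HasAntidiagonal.antidiagonal y.2,
            moyalB α x.1 (u r.1) (moyalB α r.2 (v z.1) (w z.2)) := by
        refine Finset.sum_congr rfl fun x _ => Finset.sum_congr rfl fun y _ => ?_
        exact (antidiag_pair_swap (fun p b => ∑ z ∈ Finset.HasAntidiagonal.antidiagonal y.2,
          moyalB α x.1 (u p) (moyalB α b (v z.1) (w z.2))) y.1).symm
    _ = ∑ x ∈ Finset.HasAntidiagonal.antidiagonal n, ∑ y ∈ Finset.HasAntidiagonal.antidiagonal x.2,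
          ∑ r ∈ Finset.HasAntidiagonal.antidiagonal y.2, ∑ z ∈ Finset.HasAntidiagonal.antidiagonal r.2,
            moyalB α x.1 (u y.1) (moyalB α r.1 (v z.1) (w z.2)) := by
        refine Finset.sum_congr rfl fun x _ => ?_
        exact antidiag_swap_nest (fun p b l => ∑ z ∈ Finset.HasAntidiagonal.antidiagonal l,
          moyalB α x.1 (u p) (moyalB α b (v z.1) (w z.2))) x.2
    _ = ∑ x ∈ Finset.HasAntidiagonal.antidiagonal n, ∑ y ∈ Finset.HasAntidiagonal.antidiagonal x.2,
          moyalB α x.1 (u y.1) (∑ r ∈ Finset.HasAntidiagonal.antidiagonal y.2,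
            ∑ z ∈ Finset.HasAntidiagonal.antidiagonal r.2, moyalB α r.1 (v z.1) (w z.2)) := by
        refine Finset.sum_congr rfl fun x _ => Finset.sum_congr rfl fun y _ => ?_
        rw [moyalB_sum_right]
        exact Finset.sum_congr rfl fun r _ => (moyalB_sum_right _ _ _ _ _).symm
end

section
/- The double zeta value as an iterated sum: Σ_{0<n₁<n₂} 1/(n₁·n₂²) = ζ(2,1) equals ζ(3). (Euler's identity ζ(2,1) = ζ(3).) -/
open Filter Finset Topology

namespace EZ21

lemma telescope (a : ℕ → ℝ) (hmono : ∀ n, a (n+1) ≤ a n)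
    (hlim : Tendsto a atTop (𝓝 0)) (k : ℕ) :
    HasSum (fun n => a n - a (n + k)) (∑ i ∈ Finset.range k, a i) := by
  have hanti : Antitone a := antitone_nat_of_succ_le hmono
  have hnn : ∀ n, 0 ≤ a n - a (n + k) := fun n => sub_nonneg.2 (hanti (Nat.le_add_right n k))
  rw [hasSum_iff_tendsto_nat_of_nonneg hnn]
  have hps : (fun N => ∑ n ∈ range N, (a n - a (n + k))) =
      fun N => (∑ i ∈ range k, a i) - ∑ j ∈ range k, a (N + j) := by
    funext N
    have e1 := Finset.sum_range_add a k N
    have e2 := Finset.sum_range_add a N k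
    rw [Finset.sum_sub_distrib]
    have h3 : ∑ n ∈ range N, a (n + k) = ∑ n ∈ range N, a (k + n) := by
      apply Finset.sum_congr rfl; intros; rw [add_comm]
    rw [h3, add_comm k N] at *
    linarith
  rw [hps]
  have h2 : Tendsto (fun N => ∑ j ∈ range k, a (N + j)) atTop (𝓝 0) := by
    have := tendsto_finset_sum (range k)
      (fun j _ => hlim.comp (tendsto_add_atTop_nat j))
    simpa using this
  have := (tendsto_const_nhds (x := ∑ i ∈ range k, a i) (f := atTop)).sub h2
  simpa using this


noncomputable def g (n : ℕ) : ℝ := 1 / (((n : ℝ) + 1) * Real.sqrt ((n : ℝ) + 1))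

lemma g_nonneg : ∀ n, 0 ≤ g n := fun n => by
  unfold g; positivity

lemma g_eq (n : ℕ) : g n = 1 / ((n : ℝ) + 1) ^ ((3 : ℝ)/2) := by
  unfold g
  have h : (0:ℝ) < (n : ℝ) + 1 := by positivity
  rw [show ((3:ℝ)/2) = 1 + 1/2 by norm_num, Real.rpow_add h, Real.rpow_one,
    Real.sqrt_eq_rpow]

lemma g_summable : Summable g := by
  have h1 : Summable (fun n : ℕ => 1 / (n : ℝ) ^ ((3:ℝ)/2)) :=
    Real.summable_one_div_nat_rpow.2 (by norm_num)
  have h2 := (summable_nat_add_iff 1).2 h1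
  refine h2.congr fun n => ?_
  rw [g_eq]
  push_cast
  ring_nf

lemma sqrt_ab (a b : ℝ) (ha : 0 ≤ a) (hb : 0 ≤ b) :
    Real.sqrt (a * b) ≤ a + b := by
  have h : a * b ≤ (a + b) ^ 2 := by nlinarith
  calc Real.sqrt (a * b) ≤ Real.sqrt ((a+b)^2) := Real.sqrt_le_sqrt h
  _ = a + b := Real.sqrt_sq (by linarith)

lemma gg (m n : ℕ) : g m * g n =
    1 / (((m:ℝ)+1) * ((n:ℝ)+1) * Real.sqrt (((m:ℝ)+1) * ((n:ℝ)+1))) := by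
  unfold g
  rw [Real.sqrt_mul (by positivity)]
  field_simp

lemma dom1 (m n : ℕ) :
    1 / (((m:ℝ)+1) * ((n:ℝ)+1) * ((m:ℝ)+(n:ℝ)+2)) ≤ g m * g n := by
  rw [gg]
  set a := (m:ℝ)+1; set b := (n:ℝ)+1
  have ha : (1:ℝ) ≤ a := by simp [a]
  have hb : (1:ℝ) ≤ b := by simp [b]
  have hs : Real.sqrt (a*b) ≤ a + b := sqrt_ab a b (by linarith) (by linarith)
  have hsp : 0 < Real.sqrt (a*b) := Real.sqrt_pos.2 (by nlinarith)
  apply one_div_le_one_div_of_le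
  · positivity
  · have : (m:ℝ)+(n:ℝ)+2 = a + b := by simp [a, b]; ring
    rw [this]
    have h0 : 0 < a * b := by nlinarith
    nlinarith [mul_le_mul_of_nonneg_left hs (le_of_lt h0)]

lemma dom2 (m n : ℕ) :
    1 / (((m:ℝ)+1) * ((m:ℝ)+(n:ℝ)+2)^2) ≤ g m * g n := by
  rw [gg]
  set a := (m:ℝ)+1 with hadef; set b := (n:ℝ)+1 with hbdef
  have ha : (1:ℝ) ≤ a := by simp [hadef]
  have hb : (1:ℝ) ≤ b := by simp [hbdef]
  have hab : (m:ℝ)+(n:ℝ)+2 = a + b := by simp [hadef, hbdef]; ring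
  rw [hab]
  apply one_div_le_one_div_of_le
  · positivity
  · -- a*b*√(ab) ≤ a*(a+b)^2  ⟸  b*√(ab) ≤ (a+b)^2
    have key : b * Real.sqrt (a*b) ≤ (a+b)^2 := by
      have h1 : Real.sqrt (a * b^3) = b * Real.sqrt (a*b) := by
        rw [show a * b^3 = b^2 * (a*b) by ring,
          Real.sqrt_mul (by positivity : (0:ℝ) ≤ b^2) (a*b),
          Real.sqrt_sq (by linarith : (0:ℝ) ≤ b)]
      rw [← h1]
      have hcub : a * b^3 ≤ ((a+b)^2)^2 := by
        have h4 : a ≤ a + b := by linarith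
        have h5 : b^3 ≤ (a+b)^3 := pow_le_pow_left₀ (by linarith) (by linarith) 3
        calc a * b^3 ≤ (a+b) * (a+b)^3 :=
              mul_le_mul h4 h5 (by positivity) (by linarith)
        _ = ((a+b)^2)^2 := by ring
      calc Real.sqrt (a * b^3) ≤ Real.sqrt (((a+b)^2)^2) := Real.sqrt_le_sqrt hcub
      _ = (a+b)^2 := Real.sqrt_sq (by positivity)
    calc a * b * Real.sqrt (a*b) = a * (b * Real.sqrt (a*b)) := by ring
    _ ≤ a * (a+b)^2 := by
        apply mul_le_mul_of_nonneg_left key (by linarith)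

noncomputable def f1 (p : ℕ × ℕ) : ℝ :=
  1 / (((p.1:ℝ)+1) * ((p.2:ℝ)+1) * ((p.1:ℝ)+(p.2:ℝ)+2))

noncomputable def f2 (p : ℕ × ℕ) : ℝ :=
  1 / (((p.1:ℝ)+1) * ((p.1:ℝ)+(p.2:ℝ)+2)^2)

noncomputable def F (p : ℕ × ℕ) : ℝ :=
  if p.2 < p.1 then 1 / (((p.2:ℝ)+1) * ((p.1:ℝ)+1)^2) else 0

lemma gg_summable : Summable (fun p : ℕ × ℕ => g p.1 * g p.2) :=
  g_summable.mul_of_nonneg g_summable g_nonneg g_nonneg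

lemma f1_nonneg (p : ℕ × ℕ) : 0 ≤ f1 p := by unfold f1; positivity
lemma f2_nonneg (p : ℕ × ℕ) : 0 ≤ f2 p := by unfold f2; positivity
lemma F_nonneg (p : ℕ × ℕ) : 0 ≤ F p := by
  unfold F; split <;> positivity

lemma f1_summable : Summable f1 :=
  gg_summable.of_nonneg_of_le f1_nonneg (fun p => dom1 p.1 p.2)

lemma f2_summable : Summable f2 :=
  gg_summable.of_nonneg_of_le f2_nonneg (fun p => dom2 p.1 p.2)

lemma F_summable : Summable F := by
  refine gg_summable.of_nonneg_of_le F_nonneg (fun p => ?_)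
  rw [gg]
  unfold F
  set a := (p.1:ℝ)+1 with hadef
  set b := (p.2:ℝ)+1 with hbdef
  have ha : (1:ℝ) ≤ a := by simp [hadef]
  have hb : (1:ℝ) ≤ b := by simp [hbdef]
  split
  · rename_i h
    have hba : b ≤ a := by
      rw [hadef, hbdef]
      have : (p.2:ℝ) + 1 ≤ (p.1:ℝ) := by exact_mod_cast h
      linarith
    have hs : Real.sqrt (a*b) ≤ a := by
      calc Real.sqrt (a*b) ≤ Real.sqrt (a*a) :=
            Real.sqrt_le_sqrt (by nlinarith)
      _ = a := by rw [← sq]; exact Real.sqrt_sq (by linarith)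
    apply one_div_le_one_div_of_le
    · positivity
    · nlinarith [mul_le_mul_of_nonneg_left hs (show (0:ℝ) ≤ a*b by nlinarith)]
  · positivity

noncomputable def H (k : ℕ) : ℝ := ∑ i ∈ range k, 1 / ((i:ℝ)+1)

lemma slice1 (m : ℕ) :
    HasSum (fun n => f1 (m, n)) (H (m+1) / ((m:ℝ)+1)^2) := by
  have hm : (0:ℝ) < (m:ℝ)+1 := by positivity
  have ht := telescope (fun n => 1 / ((n:ℝ)+1))
    (fun n => by
      apply one_div_le_one_div_of_le (by positivity)
      push_cast; linarith)
    tendsto_one_div_add_atTop_nhds_zero_nat (m+1)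
  have ht2 := (ht.div_const ((m:ℝ)+1)).div_const ((m:ℝ)+1)
  have hfun : (fun n : ℕ =>
      (1 / ((n:ℝ)+1) - 1 / (((n + (m+1) : ℕ):ℝ)+1)) / ((m:ℝ)+1) / ((m:ℝ)+1))
      = fun n => f1 (m, n) := by
    funext n
    unfold f1
    have hn : (0:ℝ) < (n:ℝ)+1 := by positivity
    have hc : (0:ℝ) < (m:ℝ)+(n:ℝ)+2 := by positivity
    push_cast
    field_simp
    ring
  rw [hfun] at ht2
  convert ht2 using 1
  · rfl
  unfold H
  rw [div_div, sq]


lemma T_eq : ∑' p : ℕ × ℕ, f1 p = ∑' m : ℕ, H (m+1) / ((m:ℝ)+1)^2 := by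
  rw [Summable.tsum_prod' f1_summable (fun m => (slice1 m).summable)]
  exact tsum_congr fun m => (slice1 m).tsum_eq

lemma sumH1_summable : Summable (fun m : ℕ => H (m+1) / ((m:ℝ)+1)^2) := by
  have h := ((summable_prod_of_nonneg (fun p => f1_nonneg p)).1 f1_summable).2
  exact h.congr fun m => (slice1 m).tsum_eq

lemma sliceF_summable (k : ℕ) : Summable (fun j => F (k, j)) :=
  summable_of_ne_finset_zero (s := range k) (fun j hj => by
    unfold F
    rw [if_neg]
    simpa using hj)

lemma sliceF_tsum (k : ℕ) : ∑' j, F (k, j) = H k / ((k:ℝ)+1)^2 := by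
  rw [tsum_eq_sum (s := range k) (fun j hj => by
    unfold F
    rw [if_neg]
    simpa using hj)]
  unfold H
  rw [Finset.sum_div]
  refine Finset.sum_congr rfl fun j hj => ?_
  simp only [Finset.mem_range] at hj
  unfold F
  rw [if_pos hj, div_div]

lemma SF_eq : ∑' p : ℕ × ℕ, F p = ∑' k : ℕ, H k / ((k:ℝ)+1)^2 := by
  rw [Summable.tsum_prod' F_summable sliceF_summable]
  exact tsum_congr sliceF_tsum

lemma sumH0_summable : Summable (fun k : ℕ => H k / ((k:ℝ)+1)^2) := by
  have h := ((summable_prod_of_nonneg (fun p => F_nonneg p)).1 F_summable).2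
  exact h.congr sliceF_tsum

lemma f2_eq_F : ∑' p : ℕ × ℕ, f2 p = ∑' p : ℕ × ℕ, F p := by
  have hi : Function.Injective (fun p : ℕ × ℕ => ((p.1 + p.2 + 1, p.1) : ℕ × ℕ)) := by
    intro p q h
    simp only [Prod.mk.injEq] at h
    obtain ⟨h1, h2⟩ := h
    ext <;> omega
  have hsupp : Function.support F ⊆
      Set.range (fun p : ℕ × ℕ => ((p.1 + p.2 + 1, p.1) : ℕ × ℕ)) := by
    intro q hq
    have hlt : q.2 < q.1 := by
      by_contra hc
      apply hq
      unfold F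
      rw [if_neg hc]
    refine ⟨(q.2, q.1 - q.2 - 1), ?_⟩
    rw [Prod.ext_iff]
    constructor <;> simp <;> omega
  rw [← hi.tsum_eq hsupp]
  apply tsum_congr
  intro p
  unfold f2 F
  simp only
  rw [if_pos (by omega : p.1 < p.1 + p.2 + 1)]
  push_cast
  ring_nf

lemma f1_split (p : ℕ × ℕ) : f1 p = f2 p + f2 p.swap := by
  unfold f1 f2
  simp only [Prod.fst_swap, Prod.snd_swap]
  have h1 : (0:ℝ) < (p.1:ℝ)+1 := by positivity
  have h2 : (0:ℝ) < (p.2:ℝ)+1 := by positivity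
  have h3 : (0:ℝ) < (p.1:ℝ)+(p.2:ℝ)+2 := by positivity
  have h4 : (0:ℝ) < (p.2:ℝ)+(p.1:ℝ)+2 := by positivity
  field_simp
  ring

lemma swap_summable : Summable (fun p : ℕ × ℕ => f2 p.swap) :=
  (Equiv.prodComm ℕ ℕ).summable_iff.2 f2_summable

lemma T_split : ∑' p : ℕ × ℕ, f1 p = (∑' p : ℕ × ℕ, f2 p) + ∑' p : ℕ × ℕ, f2 p := by
  calc ∑' p : ℕ × ℕ, f1 p = ∑' p : ℕ × ℕ, (f2 p + f2 p.swap) := tsum_congr f1_split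
  _ = (∑' p : ℕ × ℕ, f2 p) + ∑' p : ℕ × ℕ, f2 p.swap := Summable.tsum_add f2_summable swap_summable
  _ = (∑' p : ℕ × ℕ, f2 p) + ∑' p : ℕ × ℕ, f2 p := by
      congr 1
      exact (Equiv.prodComm ℕ ℕ).tsum_eq f2

lemma z3_summable : Summable (fun n : ℕ => 1 / ((n:ℝ)+1)^3) := by
  have h1 : Summable (fun n : ℕ => 1 / (n : ℝ) ^ (3:ℕ)) :=
    Real.summable_one_div_nat_pow.2 (by norm_num)
  have h2 := (summable_nat_add_iff 1).2 h1
  exact h2.congr fun n => by push_cast; ring_nf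

lemma H_step : ∑' m : ℕ, H (m+1) / ((m:ℝ)+1)^2
    = (∑' m : ℕ, H m / ((m:ℝ)+1)^2) + ∑' m : ℕ, 1 / ((m:ℝ)+1)^3 := by
  rw [← Summable.tsum_add sumH0_summable z3_summable]
  apply tsum_congr
  intro m
  unfold H
  rw [Finset.sum_range_succ]
  have hm : (0:ℝ) < (m:ℝ)+1 := by positivity
  field_simp

lemma main : ∑' p : ℕ × ℕ, f2 p = ∑' n : ℕ, 1 / ((n:ℝ)+1)^3 := by
  have h1 := T_split
  rw [T_eq, H_step, f2_eq_F, SF_eq] at h1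
  rw [f2_eq_F, SF_eq]
  linarith

noncomputable def e : ℕ × ℕ ≃ {q : ℕ × ℕ // 0 < q.1 ∧ q.1 < q.2} where
  toFun p := ⟨(p.1 + 1, p.1 + p.2 + 2), by omega, by omega⟩
  invFun q := (q.1.1 - 1, q.1.2 - q.1.1 - 1)
  left_inv p := by
    obtain ⟨a, b⟩ := p
    simp only [Prod.mk.injEq]
    omega
  right_inv q := by
    obtain ⟨⟨a, b⟩, ha, hb⟩ := q
    simp only [Subtype.mk.injEq, Prod.mk.injEq] at *
    omega

end EZ21

/-- Euler's identity `ζ(2,1) = ζ(3)`: the double zeta value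
`Σ_{0<n₁<n₂} 1/(n₁·n₂²)` equals `Σ_{n≥1} 1/n³`. -/
theorem euler_zeta_two_one :
    (∑' p : {q : ℕ × ℕ // 0 < q.1 ∧ q.1 < q.2},
        (1 : ℝ) / ((p.1.1 : ℝ) * (p.1.2 : ℝ) ^ 2))
      = ∑' n : ℕ, (1 : ℝ) / ((n + 1 : ℕ) : ℝ) ^ 3 := by
  have h1 : (∑' p : {q : ℕ × ℕ // 0 < q.1 ∧ q.1 < q.2},
        (1 : ℝ) / ((p.1.1 : ℝ) * (p.1.2 : ℝ) ^ 2))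
      = ∑' p : ℕ × ℕ, EZ21.f2 p := by
    rw [← EZ21.e.tsum_eq]
    apply tsum_congr
    intro p
    unfold EZ21.f2
    show (1:ℝ) / (((p.1 + 1 : ℕ):ℝ) * ((p.1 + p.2 + 2 : ℕ):ℝ)^2) = _
    push_cast
    ring_nf
  rw [h1, EZ21.main]
  apply tsum_congr
  intro n
  push_cast
  ring_nf
end
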